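/- arXiv:1206.2976 — 5 statements merged into one kernel-verified Lean document; each statement's English description precedes it below -/
import Mathlib

section
/- Conservation of cross helicity (Section 3.3): Let u, v, B : ℝ × E → E and b : ℝ × E → ℝ be smooth, where E = EuclideanSpace ℝ (Fin 3). Assume: (i) v satisfies the Kelvin equation ∂t v + D_x v(u) + (D_x u)ᵀ v = ∇b everywhere; (ii) B satisfies the flux (2-form) advection equation ∂t B = curl(u × B) everywhere and div B = 0 everywhere; and (iii) there is a compact set K ⊆ E with B(t,x) = 0 whenever x ∉ K. Then the cross helicity t ↦ ∫_E ⟪B(t,x), v(t,x)⟫ dx is constant in t. -/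
open scoped RealInnerProductSpace
open MeasureTheory
noncomputable section

/-- Spatial Fréchet derivative `D_x w(t,x)` of a time-dependent field. -/
def Dx {n : ℕ} {F : Type*} [NormedAddCommGroup F] [NormedSpace ℝ F]
    (w : ℝ × EuclideanSpace ℝ (Fin n) → F) (t : ℝ) (x : EuclideanSpace ℝ (Fin n)) :
    EuclideanSpace ℝ (Fin n) →L[ℝ] F :=
  fderiv ℝ (fun y => w (t, y)) x

/-- Partial time derivative `∂ₜ w(t,x)` of a time-dependent field. -/
def dt {n : ℕ} {F : Type*} [NormedAddCommGroup F] [NormedSpace ℝ F]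
    (w : ℝ × EuclideanSpace ℝ (Fin n) → F) (t : ℝ) (x : EuclideanSpace ℝ (Fin n)) : F :=
  deriv (fun τ => w (τ, x)) t

/-- Lie bracket `[u,η](t,x) = D_x η(t,x)(u(t,x)) − D_x u(t,x)(η(t,x))`. -/
def bracket {n : ℕ} (u η : ℝ × EuclideanSpace ℝ (Fin n) → EuclideanSpace ℝ (Fin n))
    (t : ℝ) (x : EuclideanSpace ℝ (Fin n)) : EuclideanSpace ℝ (Fin n) :=
  Dx η t x (u (t, x)) - Dx u t x (η (t, x))

/-- Divergence `div w(t,x) = trace (D_x w(t,x))`. -/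
def dive {n : ℕ} (w : ℝ × EuclideanSpace ℝ (Fin n) → EuclideanSpace ℝ (Fin n))
    (t : ℝ) (x : EuclideanSpace ℝ (Fin n)) : ℝ :=
  LinearMap.trace ℝ _ (Dx w t x : EuclideanSpace ℝ (Fin n) →ₗ[ℝ] EuclideanSpace ℝ (Fin n))

/-- Spatial gradient of a time-dependent scalar field. -/
def grad {n : ℕ} (f : ℝ × EuclideanSpace ℝ (Fin n) → ℝ) (t : ℝ)
    (x : EuclideanSpace ℝ (Fin n)) : EuclideanSpace ℝ (Fin n) :=
  gradient (fun y => f (t, y)) x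

/-- Curl of a time-dependent vector field on `EuclideanSpace ℝ (Fin 3)` (0-indexed components). -/
def curl (w : ℝ × EuclideanSpace ℝ (Fin 3) → EuclideanSpace ℝ (Fin 3)) (t : ℝ)
    (x : EuclideanSpace ℝ (Fin 3)) : EuclideanSpace ℝ (Fin 3) :=
  (WithLp.equiv 2 (Fin 3 → ℝ)).symm
    ![Dx w t x (EuclideanSpace.single 1 1) 2 - Dx w t x (EuclideanSpace.single 2 1) 1,
      Dx w t x (EuclideanSpace.single 2 1) 0 - Dx w t x (EuclideanSpace.single 0 1) 2,
      Dx w t x (EuclideanSpace.single 0 1) 1 - Dx w t x (EuclideanSpace.single 1 1) 0]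

/-- Cross product on `EuclideanSpace ℝ (Fin 3)`. -/
def cross (a b : EuclideanSpace ℝ (Fin 3)) : EuclideanSpace ℝ (Fin 3) :=
  (WithLp.equiv 2 (Fin 3 → ℝ)).symm
    ![a 1 * b 2 - a 2 * b 1, a 2 * b 0 - a 0 * b 2, a 0 * b 1 - a 1 * b 0]

namespace CrossHelicityAux

local notation "E3" => EuclideanSpace ℝ (Fin 3)

lemma grad_inner (f : E3 → ℝ) (x a : E3) : ⟪gradient f x, a⟫ = fderiv ℝ f x a := by
  simp [gradient, InnerProductSpace.toDual_symm_apply]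

lemma sum_single (a : E3) : a = ∑ i : Fin 3, a i • EuclideanSpace.single i 1 := by
  refine PiLp.ext fun j => ?_
  simp [Fin.sum_univ_three, EuclideanSpace.single_apply]
  fin_cases j <;> simp

lemma clm_apply_sum {F : Type*} [NormedAddCommGroup F] [NormedSpace ℝ F]
    (T : E3 →L[ℝ] F) (a : E3) :
    T a = ∑ j : Fin 3, a j • T (EuclideanSpace.single j 1) := by
  conv_lhs => rw [sum_single a]
  rw [map_sum]
  simp

lemma trace_eq (T : E3 →L[ℝ] E3) :
    LinearMap.trace ℝ _ (T : E3 →ₗ[ℝ] E3) = ∑ i : Fin 3, T (EuclideanSpace.single i 1) i := by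
  classical
  rw [LinearMap.trace_eq_matrix_trace ℝ ((EuclideanSpace.basisFun (Fin 3) ℝ).toBasis)]
  rw [Matrix.trace]
  congr 1

section helpers
variable {F : Type*} [NormedAddCommGroup F] [NormedSpace ℝ F]

lemma slice_contDiff {w : ℝ × E3 → F} (hw : ContDiff ℝ (⊤ : ℕ∞) w) (t : ℝ) :
    ContDiff ℝ (⊤ : ℕ∞) (fun y : E3 => w (t, y)) :=
  hw.comp (contDiff_const.prodMk contDiff_id)

lemma tslice_contDiff {w : ℝ × E3 → F} (hw : ContDiff ℝ (⊤ : ℕ∞) w) (x : E3) :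
    ContDiff ℝ (⊤ : ℕ∞) (fun τ : ℝ => w (τ, x)) :=
  hw.comp (contDiff_id.prodMk contDiff_const)

lemma Dx_apply_comp {w : ℝ × E3 → E3} (hw : ContDiff ℝ (⊤ : ℕ∞) w) (t : ℝ) (x : E3) (r : E3) (i : Fin 3) :
    Dx w t x r i = fderiv ℝ (fun y => w (t, y) i) x r := by
  have h : (fun y => w (t, y) i) = (EuclideanSpace.proj (𝕜 := ℝ) i) ∘ (fun y => w (t, y)) := rfl
  rw [h, ((EuclideanSpace.proj (𝕜 := ℝ) i).hasFDerivAt.comp x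
    ((slice_contDiff hw t).differentiable (by simp) x).hasFDerivAt).fderiv]
  rfl

lemma hasDerivAt_tslice {w : ℝ × E3 → F} (hw : ContDiff ℝ (⊤ : ℕ∞) w) (t : ℝ) (x : E3) :
    HasDerivAt (fun τ => w (τ, x)) (dt w t x) t :=
  ((tslice_contDiff hw x).differentiable (by simp) t).hasDerivAt

lemma dt_eq_fderiv {w : ℝ × E3 → F} (hw : ContDiff ℝ (⊤ : ℕ∞) w) (t : ℝ) (x : E3) :
    dt w t x = fderiv ℝ w (t, x) ((1 : ℝ), (0 : E3)) := by
  have h1 : HasDerivAt (fun τ : ℝ => (τ, x)) ((1:ℝ), (0:E3)) t :=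
    (hasDerivAt_id t).prodMk (hasDerivAt_const t x)
  have h2 := (hw.differentiable (by simp) (t, x)).hasFDerivAt.comp_hasDerivAt t h1
  exact h2.deriv
end helpers


lemma fderiv_comp_proj (g : E3 → E3) (x : E3) (hg : DifferentiableAt ℝ g x) (r : E3) (i : Fin 3) :
    fderiv ℝ g x r i = fderiv ℝ (fun y => g y i) x r := by
  have h : (fun y => g y i) = (EuclideanSpace.proj (𝕜 := ℝ) i) ∘ g := rfl
  rw [h, ((EuclideanSpace.proj (𝕜 := ℝ) i).hasFDerivAt.comp x hg.hasFDerivAt).fderiv]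
  rfl

lemma fderiv_apply_sum (g : E3 → ℝ) (x : E3) (a : E3) :
    fderiv ℝ g x a = ∑ j : Fin 3, a j * fderiv ℝ g x (EuclideanSpace.single j 1) := by
  simpa [smul_eq_mul] using clm_apply_sum (fderiv ℝ g x) a

/-- Integral of a directional derivative of a compactly supported smooth function vanishes. -/
lemma integral_fderiv_eq_zero (g : E3 → ℝ) (hg : ContDiff ℝ (⊤ : ℕ∞) g) (hgs : HasCompactSupport g)
    (r : E3) : ∫ x, fderiv ℝ g x r = 0 := by
  have hdg : HasCompactSupport (fun x => fderiv ℝ g x r) := by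
    have : (fun x => fderiv ℝ g x r) = (fun L : E3 →L[ℝ] ℝ => L r) ∘ (fderiv ℝ g) := rfl
    rw [this]
    exact (hgs.fderiv ℝ).comp_left (by simp)
  have hcont : Continuous (fun x => fderiv ℝ g x r) :=
    (hg.continuous_fderiv (by simp)).clm_apply continuous_const
  have h1 : Integrable (fun x => fderiv ℝ g x r) := hcont.integrable_of_hasCompactSupport hdg
  have h2 : Integrable g := hg.continuous.integrable_of_hasCompactSupport hgs
  have key := integral_mul_fderiv_eq_neg_fderiv_mul_of_integrable
    (f := fun _ : E3 => (1:ℝ)) (g := g) (v := r) (μ := volume)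
    (by simpa using (integrable_zero E3 ℝ volume))
    (by simpa using h1) (by simpa using h2) (fun x _ => differentiableAt_const 1)
    (fun x _ => hg.differentiable (by simp) x)
  simpa using key

section main
variable (u v B : ℝ × E3 → E3) (b : ℝ × E3 → ℝ)

/-- The key pointwise identity. -/
lemma pointwise
    (hu : ContDiff ℝ (⊤ : ℕ∞) u) (hv : ContDiff ℝ (⊤ : ℕ∞) v) (hB : ContDiff ℝ (⊤ : ℕ∞) B) (hb : ContDiff ℝ (⊤ : ℕ∞) b)
    (hkelvin : ∀ (t : ℝ) (x : E3),
      dt v t x + Dx v t x (u (t, x))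
        + ContinuousLinearMap.adjoint (Dx u t x) (v (t, x)) = grad b t x)
    (hflux : ∀ (t : ℝ) (x : E3),
      dt B t x = curl (fun p => cross (u p) (B p)) t x)
    (hdivB : ∀ (t : ℝ) (x : E3), dive B t x = 0) (t : ℝ) (x : E3) :
    dt (fun p => ⟪B p, v p⟫) t x
      = - dive (fun p => (⟪B p, v p⟫ : ℝ) • u p - b p • B p) t x := by
  classical
  -- differentiability of slices
  have hux : DifferentiableAt ℝ (fun y => u (t, y)) x :=
    (slice_contDiff hu t).differentiable (by simp) x
  have hvx : DifferentiableAt ℝ (fun y => v (t, y)) x :=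
    (slice_contDiff hv t).differentiable (by simp) x
  have hBx : DifferentiableAt ℝ (fun y => B (t, y)) x :=
    (slice_contDiff hB t).differentiable (by simp) x
  have hbx : DifferentiableAt ℝ (fun y => b (t, y)) x :=
    (slice_contDiff hb t).differentiable (by simp) x
  have hui : ∀ i : Fin 3, DifferentiableAt ℝ (fun y => u (t, y) i) x := fun i =>
    ((EuclideanSpace.proj (𝕜 := ℝ) i).differentiable.differentiableAt).comp x hux
  have hBi : ∀ i : Fin 3, DifferentiableAt ℝ (fun y => B (t, y) i) x := fun i =>
    ((EuclideanSpace.proj (𝕜 := ℝ) i).differentiable.differentiableAt).comp x hBx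
  have hfx : DifferentiableAt ℝ (fun y => (⟪B (t, y), v (t, y)⟫ : ℝ)) x :=
    hBx.inner ℝ hvx
  -- step A : time derivative of the inner product
  have hA : dt (fun p => ⟪B p, v p⟫) t x
      = ⟪B (t, x), dt v t x⟫ + ⟪dt B t x, v (t, x)⟫ := by
    exact ((hasDerivAt_tslice hB t x).inner ℝ (hasDerivAt_tslice hv t x)).deriv
  -- step B : Kelvin equation solved for dt v
  have hdtv : dt v t x = grad b t x - Dx v t x (u (t, x))
      - ContinuousLinearMap.adjoint (Dx u t x) (v (t, x)) := by
    rw [← hkelvin t x]; abel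
  rw [hA, hdtv, hflux t x]
  rw [inner_sub_right, inner_sub_right, ContinuousLinearMap.adjoint_inner_right]
  rw [real_inner_comm (grad b t x) (B (t, x))]
  rw [grad, grad_inner]
  -- expand derivatives in general directions into sums over basis directions
  rw [clm_apply_sum (Dx v t x) (u (t, x)), clm_apply_sum (Dx u t x) (B (t, x)),
    fderiv_apply_sum _ x (B (t, x))]
  simp only [inner_sum, sum_inner, real_inner_smul_right, real_inner_smul_left]
  -- divergence side
  have hWx : DifferentiableAt ℝ
      (fun y => (⟪B (t, y), v (t, y)⟫ : ℝ) • u (t, y) - b (t, y) • B (t, y)) x :=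
    (hfx.smul hux).sub (hbx.smul hBx)
  have hdiveW : dive (fun p => (⟪B p, v p⟫ : ℝ) • u p - b p • B p) t x
      = ∑ i : Fin 3, fderiv ℝ
          (fun y => (⟪B (t, y), v (t, y)⟫ : ℝ) * u (t, y) i - b (t, y) * B (t, y) i) x
          (EuclideanSpace.single i 1) := by
    rw [dive, trace_eq]
    refine Finset.sum_congr rfl fun i _ => ?_
    exact fderiv_comp_proj _ x hWx _ i
  rw [hdiveW, Fin.sum_univ_three]
  have Hslice : ∀ (i : Fin 3) (r : E3),
      fderiv ℝ (fun y => (⟪B (t, y), v (t, y)⟫ : ℝ) * u (t, y) i - b (t, y) * B (t, y) i) x r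
      = (⟪B (t, x), fderiv ℝ (fun y => v (t, y)) x r⟫
          + ⟪fderiv ℝ (fun y => B (t, y)) x r, v (t, x)⟫) * u (t, x) i
        + ⟪B (t, x), v (t, x)⟫ * fderiv ℝ (fun y => u (t, y) i) x r
        - (b (t, x) * fderiv ℝ (fun y => B (t, y) i) x r
          + B (t, x) i * fderiv ℝ (fun y => b (t, y)) x r) := by
    intro i r
    rw [fderiv_fun_sub (hfx.fun_mul (hui i)) (hbx.fun_mul (hBi i)), ContinuousLinearMap.sub_apply,
      fderiv_fun_mul hfx (hui i), fderiv_fun_mul hbx (hBi i)]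
    simp only [ContinuousLinearMap.add_apply, ContinuousLinearMap.coe_smul', Pi.smul_apply,
      smul_eq_mul]
    rw [fderiv_inner_apply ℝ hBx hvx]
    ring
  simp only [Hslice]
  -- cross-product field: differentiability and component functions
  have hCRx : DifferentiableAt ℝ (fun y => cross (u (t, y)) (B (t, y))) x := by
    refine differentiableAt_euclidean.2 fun i => ?_
    fin_cases i
    · exact ((hui 1).mul (hBi 2)).sub ((hui 2).mul (hBi 1))
    · exact ((hui 2).mul (hBi 0)).sub ((hui 0).mul (hBi 2))
    · exact ((hui 0).mul (hBi 1)).sub ((hui 1).mul (hBi 0))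
  -- unfold curl and Dx, expand all inner products into components
  simp only [curl, Dx, PiLp.inner_apply, RCLike.inner_apply, conj_trivial,
    Fin.sum_univ_three, WithLp.equiv_symm_apply, PiLp.toLp_apply, Matrix.cons_val_zero, Matrix.cons_val_one,
    Matrix.head_cons, Matrix.cons_val_two, Matrix.tail_cons]
  -- componentwise spatial derivatives
  simp only [fderiv_comp_proj (fun y => v (t, y)) x hvx,
    fderiv_comp_proj (fun y => B (t, y)) x hBx,
    fderiv_comp_proj (fun y => u (t, y)) x hux,
    fderiv_comp_proj (fun y => cross (u (t, y)) (B (t, y))) x hCRx]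
  -- cross component functions
  have c0 : (fun y : E3 => cross (u (t, y)) (B (t, y)) (0 : Fin 3))
      = fun y => u (t, y) 1 * B (t, y) 2 - u (t, y) 2 * B (t, y) 1 := rfl
  have c1 : (fun y : E3 => cross (u (t, y)) (B (t, y)) (1 : Fin 3))
      = fun y => u (t, y) 2 * B (t, y) 0 - u (t, y) 0 * B (t, y) 2 := rfl
  have c2 : (fun y : E3 => cross (u (t, y)) (B (t, y)) (2 : Fin 3))
      = fun y => u (t, y) 0 * B (t, y) 1 - u (t, y) 1 * B (t, y) 0 := rfl
  simp only [c0, c1, c2]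
  -- expand derivatives of products
  have Hprod : ∀ (a c a' c' : Fin 3) (r : E3),
      fderiv ℝ (fun y => u (t, y) a * B (t, y) c - u (t, y) a' * B (t, y) c') x r
      = u (t, x) a * fderiv ℝ (fun y => B (t, y) c) x r
        + B (t, x) c * fderiv ℝ (fun y => u (t, y) a) x r
        - (u (t, x) a' * fderiv ℝ (fun y => B (t, y) c') x r
          + B (t, x) c' * fderiv ℝ (fun y => u (t, y) a') x r) := by
    intro a c a' c' r
    rw [fderiv_fun_sub ((hui a).fun_mul (hBi c)) ((hui a').fun_mul (hBi c')), ContinuousLinearMap.sub_apply,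
      fderiv_fun_mul (hui a) (hBi c), fderiv_fun_mul (hui a') (hBi c')]
    simp only [ContinuousLinearMap.add_apply, ContinuousLinearMap.coe_smul', Pi.smul_apply,
      smul_eq_mul]
  simp only [Hprod]
  -- the divergence-free constraint
  have hdiv3 : fderiv ℝ (fun y => B (t, y) 0) x (EuclideanSpace.single 0 1)
      + fderiv ℝ (fun y => B (t, y) 1) x (EuclideanSpace.single 1 1)
      + fderiv ℝ (fun y => B (t, y) 2) x (EuclideanSpace.single 2 1) = 0 := by
    have h := hdivB t x
    rw [dive, trace_eq, Fin.sum_univ_three] at h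
    simp only [Dx] at h
    rw [fderiv_comp_proj _ x hBx, fderiv_comp_proj _ x hBx, fderiv_comp_proj _ x hBx] at h
    exact h
  linear_combination (u (t, x) 0 * v (t, x) 0 + u (t, x) 1 * v (t, x) 1
    + u (t, x) 2 * v (t, x) 2 - b (t, x)) * hdiv3

end main
end CrossHelicityAux

open CrossHelicityAux in
/-- Conservation of cross helicity (Section 3.3): if `v` satisfies the Kelvin equation,
`B` is advected as a flux 2-form (`∂ₜB = curl(u × B)`, `div B = 0`) and is compactly
supported in space, then the cross helicity `∫ ⟪B, v⟫ dx` is constant. -/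
theorem cross_helicity_conserved
    (u v B : ℝ × EuclideanSpace ℝ (Fin 3) → EuclideanSpace ℝ (Fin 3))
    (b : ℝ × EuclideanSpace ℝ (Fin 3) → ℝ)
    (hu : ContDiff ℝ (⊤ : ℕ∞) u) (hv : ContDiff ℝ (⊤ : ℕ∞) v) (hB : ContDiff ℝ (⊤ : ℕ∞) B) (hb : ContDiff ℝ (⊤ : ℕ∞) b)
    (hkelvin : ∀ (t : ℝ) (x : EuclideanSpace ℝ (Fin 3)),
      dt v t x + Dx v t x (u (t, x))
        + ContinuousLinearMap.adjoint (Dx u t x) (v (t, x)) = grad b t x)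
    (hflux : ∀ (t : ℝ) (x : EuclideanSpace ℝ (Fin 3)),
      dt B t x = curl (fun p => cross (u p) (B p)) t x)
    (hdivB : ∀ (t : ℝ) (x : EuclideanSpace ℝ (Fin 3)), dive B t x = 0)
    (K : Set (EuclideanSpace ℝ (Fin 3))) (hK : IsCompact K)
    (hsupp : ∀ (t : ℝ) (x : EuclideanSpace ℝ (Fin 3)), x ∉ K → B (t, x) = 0) :
    ∀ t₁ t₂ : ℝ,
      (∫ x, ⟪B (t₁, x), v (t₁, x)⟫) = ∫ x, ⟪B (t₂, x), v (t₂, x)⟫ := by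
  set f : ℝ × EuclideanSpace ℝ (Fin 3) → ℝ := fun p => ⟪B p, v p⟫ with hf_def
  have hf : ContDiff ℝ (⊤ : ℕ∞) f := hB.inner ℝ hv
  set W : ℝ × EuclideanSpace ℝ (Fin 3) → EuclideanSpace ℝ (Fin 3) :=
    fun p => f p • u p - b p • B p with hW_def
  have hW : ContDiff ℝ (⊤ : ℕ∞) W := (hf.smul hu).sub (hb.smul hB)
  -- support facts
  have hfs : ∀ (t : ℝ) x, x ∉ K → f (t, x) = 0 := fun t x hx => by
    simp [hf_def, hsupp t x hx]
  have hWs : ∀ (t : ℝ) x, x ∉ K → W (t, x) = 0 := fun t x hx => by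
    simp [hW_def, hfs t x hx, hsupp t x hx]
  -- F' := dt f ; vanishing off K
  have hF'supp : ∀ (t : ℝ) x, x ∉ K → dt f t x = 0 := fun t x hx => by
    have : (fun τ => f (τ, x)) = fun _ => (0:ℝ) := funext fun τ => hfs τ x hx
    rw [dt, this, deriv_const]
  -- continuity of (t,x) ↦ dt f t x
  have hcont : Continuous fun p : ℝ × EuclideanSpace ℝ (Fin 3) =>
      fderiv ℝ f p ((1:ℝ), (0 : EuclideanSpace ℝ (Fin 3))) :=
    (hf.continuous_fderiv (by simp)).clm_apply continuous_const
  have hdteq : ∀ (t : ℝ) x, dt f t x = fderiv ℝ f (t, x) ((1:ℝ), 0) :=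
    fun t x => dt_eq_fderiv hf t x
  -- integrability of slices of f
  have hfint : ∀ t : ℝ, Integrable (fun x => f (t, x)) := fun t => by
    refine ((hf.continuous).comp (continuous_const.prodMk continuous_id)).integrable_of_hasCompactSupport ?_
    exact HasCompactSupport.intro hK (fun x hx => hfs t x hx)
  -- the integral of dt f vanishes
  have hzero : ∀ t : ℝ, (∫ x, dt f t x) = 0 := by
    intro t
    have key : ∀ x, dt f t x = - dive W t x :=
      fun x => pointwise u v B b hu hv hB hb hkelvin hflux hdivB t x
    have hdive : ∀ x, dive W t x
        = ∑ i : Fin 3, fderiv ℝ (fun y => W (t, y) i) x (EuclideanSpace.single i 1) := by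
      intro x
      rw [dive, trace_eq]
      exact Finset.sum_congr rfl fun i _ => Dx_apply_comp hW t x _ i
    have hWc : ∀ i : Fin 3, ContDiff ℝ (⊤ : ℕ∞) (fun y => W (t, y) i) := fun i =>
      (EuclideanSpace.proj (𝕜 := ℝ) i).contDiff.comp (slice_contDiff hW t)
    have hWcs : ∀ i : Fin 3, HasCompactSupport (fun y => W (t, y) i) := fun i =>
      HasCompactSupport.intro hK (fun x hx => by simp [hWs t x hx])
    calc (∫ x, dt f t x) = ∫ x, - dive W t x := by simp_rw [key]
      _ = - ∫ x, dive W t x := by rw [integral_neg]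
      _ = 0 := by
        rw [neg_eq_zero]
        calc (∫ x, dive W t x)
            = ∫ x, ∑ i : Fin 3, fderiv ℝ (fun y => W (t, y) i) x (EuclideanSpace.single i 1) := by
              simp_rw [hdive]
          _ = ∑ i : Fin 3, ∫ x, fderiv ℝ (fun y => W (t, y) i) x (EuclideanSpace.single i 1) := by
              refine integral_finset_sum _ fun i _ => ?_
              have hci : Continuous fun x =>
                  fderiv ℝ (fun y => W (t, y) i) x (EuclideanSpace.single i 1) :=
                ((hWc i).continuous_fderiv (by simp)).clm_apply continuous_const
              refine hci.integrable_of_hasCompactSupport ?_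
              have : (fun x => fderiv ℝ (fun y => W (t, y) i) x (EuclideanSpace.single i 1))
                  = (fun L : EuclideanSpace ℝ (Fin 3) →L[ℝ] ℝ => L (EuclideanSpace.single i 1))
                    ∘ (fderiv ℝ (fun y => W (t, y) i)) := rfl
              rw [this]
              exact ((hWcs i).fderiv ℝ).comp_left (by simp)
          _ = 0 := Finset.sum_eq_zero fun i _ =>
              integral_fderiv_eq_zero _ (hWc i) (hWcs i) _
  -- the derivative of the helicity
  have hD : ∀ t₀ : ℝ, HasDerivAt (fun t => ∫ x, f (t, x)) 0 t₀ := by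
    intro t₀
    obtain ⟨C, hC⟩ := (isCompact_Icc.prod hK).exists_bound_of_continuousOn
      (f := fun p : ℝ × EuclideanSpace ℝ (Fin 3) => fderiv ℝ f p ((1:ℝ), 0))
      (s := Set.Icc (t₀ - 1) (t₀ + 1) ×ˢ K) hcont.continuousOn
    have main := (hasDerivAt_integral_of_dominated_loc_of_deriv_le
      (F := fun t x => f (t, x)) (F' := fun t x => dt f t x)
      (bound := K.indicator fun _ => C) (x₀ := t₀) (s := Metric.ball t₀ 1) (Metric.ball_mem_nhds t₀ one_pos)
      (Filter.Eventually.of_forall fun τ =>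
        ((hf.continuous).comp (continuous_const.prodMk continuous_id)).aestronglyMeasurable)
      (hfint t₀)
      (by
        show AEStronglyMeasurable (fun x => dt f t₀ x) volume
        have : (fun x => dt f t₀ x)
            = fun x => fderiv ℝ f (t₀, x) ((1:ℝ), 0) := funext fun x => hdteq t₀ x
        rw [this]
        exact (hcont.comp (continuous_const.prodMk continuous_id)).aestronglyMeasurable)
      (Filter.Eventually.of_forall fun x => by
        intro τ hτ
        by_cases hx : x ∈ K
        · show ‖dt f τ x‖ ≤ _
          rw [Set.indicator_of_mem hx, hdteq τ x]
          refine hC (τ, x) ?_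
          refine Set.mk_mem_prod ?_ hx
          have := Metric.mem_ball.1 hτ
          rw [Real.dist_eq] at this
          constructor <;> [linarith [abs_le.1 this.le]; linarith [(abs_le.1 this.le).2]]
        · show ‖dt f τ x‖ ≤ _
          rw [Set.indicator_of_notMem hx, hF'supp τ x hx]
          simp)
      ((integrable_indicator_iff hK.measurableSet).2
        (integrableOn_const hK.measure_lt_top.ne))
      (Filter.Eventually.of_forall fun x τ _ => hasDerivAt_tslice hf τ x)).2
    rwa [hzero t₀] at main
  intro t₁ t₂
  exact is_const_of_deriv_eq_zero (fun t => (hD t).differentiableAt)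
    (fun t => (hD t).deriv) t₁ t₂
end
end

section
/- Kelvin circulation theorem (equations (circ2), (circ3)): Let u, v : ℝ × E → E and b : ℝ × E → ℝ be smooth, and assume v satisfies the Kelvin equation ∂t v + D_x v(u) + (D_x u)ᵀ v = ∇b everywhere. Let γ : ℝ × ℝ → E be smooth with γ(t, σ+1) = γ(t, σ) for all (t,σ) (a closed loop) and ∂t γ(t,σ) = u(t, γ(t,σ)) for all (t,σ) (the loop moves with the flow of u). Then the circulation t ↦ ∫₀¹ ⟪v(t, γ(t,σ)), ∂σ γ(t,σ)⟫ dσ is constant in t. -/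
open scoped RealInnerProductSpace
open MeasureTheory
set_option maxHeartbeats 1000000
noncomputable section

section Aux

variable {n : ℕ} {F : Type*} [NormedAddCommGroup F] [NormedSpace ℝ F]

/-- The full Fréchet derivative of a smooth time-dependent field splits into partials. -/
lemma fderiv_split (w : ℝ × EuclideanSpace ℝ (Fin n) → F) (hw : ContDiff ℝ (⊤ : ℕ∞) w)
    (t : ℝ) (x : EuclideanSpace ℝ (Fin n)) (s : ℝ) (e : EuclideanSpace ℝ (Fin n)) :
    fderiv ℝ w (t, x) (s, e) = s • dt w t x + Dx w t x e := by
  have hd : HasFDerivAt w (fderiv ℝ w (t, x)) (t, x) :=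
    (hw.differentiable (by simp) (t, x)).hasFDerivAt
  have h1 : HasDerivAt (fun τ => w (τ, x)) (fderiv ℝ w (t, x) (1, 0)) t := by
    have hc : HasDerivAt (fun τ : ℝ => (τ, x)) ((1 : ℝ), (0 : EuclideanSpace ℝ (Fin n))) t :=
      (hasDerivAt_id t).prodMk (hasDerivAt_const t x)
    exact hd.comp_hasDerivAt t hc
  have hdt : dt w t x = fderiv ℝ w (t, x) (1, 0) := h1.deriv
  have h2 : HasFDerivAt (fun y => w (t, y))
      ((fderiv ℝ w (t, x)).comp (ContinuousLinearMap.inr ℝ ℝ (EuclideanSpace ℝ (Fin n)))) x :=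
    hd.comp x (hasFDerivAt_prodMk_right t x)
  have hDx : Dx w t x
      = (fderiv ℝ w (t, x)).comp (ContinuousLinearMap.inr ℝ ℝ (EuclideanSpace ℝ (Fin n))) :=
    h2.fderiv
  rw [hdt, hDx]
  simp only [ContinuousLinearMap.comp_apply, ContinuousLinearMap.inr_apply]
  rw [← (fderiv ℝ w (t, x)).map_smul, ← (fderiv ℝ w (t, x)).map_add]
  congr 1
  simp [Prod.ext_iff]

end Aux

/-- Kelvin circulation theorem (equations (circ2), (circ3)): if `v` satisfies the Kelvin
equation and the closed loop `γ` moves with the flow of `u`, then the circulation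
`∮ ⟪v, ∂σγ⟫ dσ` is constant in time. -/
theorem kelvin_circulation {n : ℕ} (hn : 1 ≤ n)
    (u v : ℝ × EuclideanSpace ℝ (Fin n) → EuclideanSpace ℝ (Fin n))
    (b : ℝ × EuclideanSpace ℝ (Fin n) → ℝ)
    (γ : ℝ × ℝ → EuclideanSpace ℝ (Fin n))
    (hu : ContDiff ℝ (⊤ : ℕ∞) u) (hv : ContDiff ℝ (⊤ : ℕ∞) v) (hb : ContDiff ℝ (⊤ : ℕ∞) b) (hγ : ContDiff ℝ (⊤ : ℕ∞) γ)
    (hkelvin : ∀ (t : ℝ) (x : EuclideanSpace ℝ (Fin n)),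
      dt v t x + Dx v t x (u (t, x))
        + ContinuousLinearMap.adjoint (Dx u t x) (v (t, x)) = grad b t x)
    (hloop : ∀ (t σ : ℝ), γ (t, σ + 1) = γ (t, σ))
    (hflow : ∀ (t σ : ℝ), deriv (fun τ => γ (τ, σ)) t = u (t, γ (t, σ))) :
    ∀ t₁ t₂ : ℝ,
      (∫ σ in (0:ℝ)..1, ⟪v (t₁, γ (t₁, σ)), deriv (fun s' => γ (t₁, s')) σ⟫)
      = ∫ σ in (0:ℝ)..1, ⟪v (t₂, γ (t₂, σ)), deriv (fun s' => γ (t₂, s')) σ⟫ := by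
  classical
  set Φ : ℝ × ℝ → (ℝ × ℝ) →L[ℝ] EuclideanSpace ℝ (Fin n) := fun p => fderiv ℝ γ p with hΦdef
  have hΦ : ContDiff ℝ (⊤ : ℕ∞) Φ := hγ.fderiv_right (by simp)
  have hγdiff : Differentiable ℝ γ := hγ.differentiable (by simp)
  have hΦdiff : Differentiable ℝ Φ := hΦ.differentiable (by simp)
  -- derivative of γ along σ and along t
  have hγσ : ∀ t σ, HasDerivAt (fun s' => γ (t, s')) (Φ (t, σ) (0, 1)) σ := by
    intro t σ
    have hc : HasDerivAt (fun s' : ℝ => (t, s')) ((0 : ℝ), (1 : ℝ)) σ :=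
      (hasDerivAt_const σ t).prodMk (hasDerivAt_id σ)
    exact (hγdiff (t, σ)).hasFDerivAt.comp_hasDerivAt σ hc
  have hγt : ∀ t σ, HasDerivAt (fun τ => γ (τ, σ)) (Φ (t, σ) (1, 0)) t := by
    intro t σ
    have hc : HasDerivAt (fun τ : ℝ => (τ, σ)) ((1 : ℝ), (0 : ℝ)) t :=
      (hasDerivAt_id t).prodMk (hasDerivAt_const t σ)
    exact (hγdiff (t, σ)).hasFDerivAt.comp_hasDerivAt t hc
  have hflow' : ∀ t σ, Φ (t, σ) (1, 0) = u (t, γ (t, σ)) := by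
    intro t σ
    rw [← (hγt t σ).deriv]; exact hflow t σ
  -- the integrand and the scalar potential along the loop
  set f : ℝ × ℝ → ℝ := fun p => ⟪v (p.1, γ p), Φ p (0, 1)⟫ with hfdef
  set g : ℝ × ℝ → ℝ := fun p => b (p.1, γ p) with hgdef
  have hfsm : ContDiff ℝ (⊤ : ℕ∞) f := by
    have h1 : ContDiff ℝ (⊤ : ℕ∞) (fun p : ℝ × ℝ => v (p.1, γ p)) :=
      hv.comp (contDiff_fst.prodMk hγ)
    have h2 : ContDiff ℝ (⊤ : ℕ∞) (fun p : ℝ × ℝ => Φ p (0, 1)) :=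
      hΦ.clm_apply contDiff_const
    exact h1.inner ℝ h2
  have hgsm : ContDiff ℝ (⊤ : ℕ∞) g := hb.comp (contDiff_fst.prodMk hγ)
  have hgdiff : Differentiable ℝ g := hgsm.differentiable (by simp)
  -- derivative of g along σ
  have hgσ : ∀ t σ, HasDerivAt (fun s' => g (t, s')) (fderiv ℝ g (t, σ) (0, 1)) σ := by
    intro t σ
    have hc : HasDerivAt (fun s' : ℝ => (t, s')) ((0 : ℝ), (1 : ℝ)) σ :=
      (hasDerivAt_const σ t).prodMk (hasDerivAt_id σ)
    exact (hgdiff (t, σ)).hasFDerivAt.comp_hasDerivAt σ hc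
  -- the key computation: ∂ₜ f = ∂σ g
  have key : ∀ t σ, HasDerivAt (fun τ => f (τ, σ)) (fderiv ℝ g (t, σ) (0, 1)) t := by
    intro t σ
    set x := γ (t, σ) with hx
    set e := Φ (t, σ) (0, 1) with he
    -- (A) derivative of τ ↦ v (τ, γ (τ, σ))
    have hcurve : HasDerivAt (fun τ : ℝ => (τ, γ (τ, σ))) ((1 : ℝ), u (t, x)) t := by
      have := (hasDerivAt_id t).prodMk ((hflow' t σ) ▸ hγt t σ)
      exact this
    have hA : HasDerivAt (fun τ => v (τ, γ (τ, σ)))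
        (dt v t x + Dx v t x (u (t, x))) t := by
      have h := (hv.differentiable (by simp) (t, x)).hasFDerivAt.comp_hasDerivAt t hcurve
      have hsplit := fderiv_split v hv t x 1 (u (t, x))
      rw [one_smul] at hsplit
      rw [← hsplit]
      exact h
    -- (B) derivative of τ ↦ Φ (τ, σ) (0,1), via symmetry of second derivatives
    have hB : HasDerivAt (fun τ => Φ (τ, σ) (0, 1)) (Dx u t x e) t := by
      have hΦd : HasFDerivAt Φ (fderiv ℝ Φ (t, σ)) (t, σ) := (hΦdiff (t, σ)).hasFDerivAt
      have hsymm : fderiv ℝ Φ (t, σ) (1, 0) (0, 1) = fderiv ℝ Φ (t, σ) (0, 1) (1, 0) :=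
        second_derivative_symmetric (fun y => (hγdiff y).hasFDerivAt) hΦd (1, 0) (0, 1)
      -- derivative of τ ↦ Φ (τ, σ) in t
      have hb1 : HasDerivAt (fun τ => Φ (τ, σ)) (fderiv ℝ Φ (t, σ) (1, 0)) t := by
        have hc : HasDerivAt (fun τ : ℝ => (τ, σ)) ((1 : ℝ), (0 : ℝ)) t :=
          (hasDerivAt_id t).prodMk (hasDerivAt_const t σ)
        exact hΦd.comp_hasDerivAt t hc
      have hb2 : HasDerivAt (fun τ => Φ (τ, σ) (0, 1))
          (fderiv ℝ Φ (t, σ) (1, 0) (0, 1)) t := by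
        simpa using hb1.clm_apply (hasDerivAt_const t ((0 : ℝ), (1 : ℝ)))
      -- derivative of σ' ↦ Φ (t, σ') (1,0) computed two ways
      have hb4 : HasDerivAt (fun σ' => Φ (t, σ') (1, 0))
          (fderiv ℝ Φ (t, σ) (0, 1) (1, 0)) σ := by
        have hc : HasDerivAt (fun s' : ℝ => (t, s')) ((0 : ℝ), (1 : ℝ)) σ :=
          (hasDerivAt_const σ t).prodMk (hasDerivAt_id σ)
        have hb3 : HasDerivAt (fun σ' => Φ (t, σ')) (fderiv ℝ Φ (t, σ) (0, 1)) σ :=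
          hΦd.comp_hasDerivAt σ hc
        simpa using hb3.clm_apply (hasDerivAt_const σ ((1 : ℝ), (0 : ℝ)))
      have hb5 : (fun σ' => Φ (t, σ') (1, 0)) = fun σ' => u (t, γ (t, σ')) := by
        funext σ'; exact hflow' t σ'
      have hb6 : HasDerivAt (fun σ' => u (t, γ (t, σ'))) (Dx u t x e) σ := by
        have hc : HasDerivAt (fun σ' : ℝ => (t, γ (t, σ'))) ((0 : ℝ), e) σ :=
          (hasDerivAt_const σ t).prodMk (hγσ t σ)
        have h := (hu.differentiable (by simp) (t, x)).hasFDerivAt.comp_hasDerivAt σ hc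
        have hsplit := fderiv_split u hu t x 0 e
        rw [zero_smul, zero_add] at hsplit
        rw [← hsplit]
        exact h
      have heq : fderiv ℝ Φ (t, σ) (0, 1) (1, 0) = Dx u t x e := by
        rw [hb5] at hb4
        exact hb4.unique hb6
      rw [← heq, ← hsymm]
      exact hb2
    -- combine with the Kelvin equation
    have hAB := hA.inner ℝ hB
    have hval : (⟪v (t, γ (t, σ)), Dx u t x e⟫
        + ⟪dt v t x + Dx v t x (u (t, x)), Φ (t, σ) (0, 1)⟫)
        = fderiv ℝ g (t, σ) (0, 1) := by
      have h1 : ⟪v (t, x), Dx u t x e⟫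
          = ⟪(ContinuousLinearMap.adjoint (Dx u t x)) (v (t, x)), e⟫ :=
        (ContinuousLinearMap.adjoint_inner_left (Dx u t x) e (v (t, x))).symm
      have h2 : ⟪v (t, x), Dx u t x e⟫ + ⟪dt v t x + Dx v t x (u (t, x)), e⟫
          = ⟪grad b t x, e⟫ := by
        rw [h1, ← inner_add_left,
          add_comm ((ContinuousLinearMap.adjoint (Dx u t x)) (v (t, x)))
            (dt v t x + Dx v t x (u (t, x))), hkelvin t x]
      have h3 : ⟪grad b t x, e⟫ = Dx b t x e := by
        simp only [grad, gradient, Dx]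
        exact InnerProductSpace.toDual_symm_apply
      have h4 : fderiv ℝ g (t, σ) (0, 1) = Dx b t x e := by
        have hc : HasDerivAt (fun σ' : ℝ => (t, γ (t, σ'))) ((0 : ℝ), e) σ :=
          (hasDerivAt_const σ t).prodMk (hγσ t σ)
        have hgb : HasDerivAt (fun σ' => b (t, γ (t, σ'))) (Dx b t x e) σ := by
          have h := (hb.differentiable (by simp) (t, x)).hasFDerivAt.comp_hasDerivAt σ hc
          have hsplit := fderiv_split b hb t x 0 e
          rw [zero_smul, zero_add] at hsplit
          rw [← hsplit]
          exact h
        exact (hgσ t σ).unique hgb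
      rw [h2, h3, h4]
    rw [← hval]
    exact hAB
  -- continuity facts
  have hf'cont : Continuous fun p : ℝ × ℝ => fderiv ℝ g p (0, 1) :=
    ((hgsm.fderiv_right (m := (⊤ : ℕ∞)) (by simp)).clm_apply contDiff_const).continuous
  have hfcont : Continuous f := hfsm.continuous
  -- the circulation
  set Fc : ℝ → ℝ := fun t => ∫ σ in (0:ℝ)..1, f (t, σ) with hFc
  have hFderiv : ∀ t₀ : ℝ, HasDerivAt Fc 0 t₀ := by
    intro t₀
    have hK : IsCompact ((Set.Icc (t₀ - 1) (t₀ + 1)) ×ˢ (Set.Icc (0:ℝ) 1)) :=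
      isCompact_Icc.prod isCompact_Icc
    obtain ⟨C, hC⟩ := hK.exists_bound_of_continuousOn hf'cont.continuousOn
    have main := intervalIntegral.hasDerivAt_integral_of_dominated_loc_of_deriv_le
      (F := fun t σ => f (t, σ)) (F' := fun t σ => fderiv ℝ g (t, σ) (0, 1))
      (x₀ := t₀) (a := (0:ℝ)) (b := 1) (bound := fun _ => C) (μ := volume)
      (s := Metric.ball t₀ 1) (Metric.ball_mem_nhds t₀ one_pos)
      (Filter.Eventually.of_forall fun x =>
        (hfcont.comp (continuous_const.prodMk continuous_id)).aestronglyMeasurable)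
      ((hfcont.comp (continuous_const.prodMk continuous_id)).intervalIntegrable 0 1)
      (hf'cont.comp (continuous_const.prodMk continuous_id)).aestronglyMeasurable
      (Filter.Eventually.of_forall fun σ hσ x hx => by
        apply hC
        constructor
        · rw [Metric.mem_ball, Real.dist_eq] at hx
          constructor <;> [linarith [abs_lt.1 hx |>.1]; linarith [abs_lt.1 hx |>.2]]
        · have : σ ∈ Set.Ioc (0:ℝ) 1 := by
            simpa [Set.uIoc_of_le (by norm_num : (0:ℝ) ≤ 1)] using hσ
          exact ⟨le_of_lt this.1, this.2⟩)
      (intervalIntegrable_const)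
      (Filter.Eventually.of_forall fun σ _ x _ => key x σ)
    have hF0 : (∫ σ in (0:ℝ)..1, fderiv ℝ g (t₀, σ) (0, 1)) = 0 := by
      rw [intervalIntegral.integral_eq_sub_of_hasDerivAt
        (f := fun σ => g (t₀, σ)) (fun σ _ => hgσ t₀ σ)
        ((hf'cont.comp (continuous_const.prodMk continuous_id)).intervalIntegrable 0 1)]
      have : γ (t₀, 1) = γ (t₀, 0) := by
        have := hloop t₀ 0
        rwa [zero_add] at this
      simp only [hgdef, this]
      ring
    rw [← hF0]
    exact main.2
  have hconst : ∀ t₁ t₂ : ℝ, Fc t₁ = Fc t₂ := fun t₁ t₂ =>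
    is_const_of_deriv_eq_zero (fun t => (hFderiv t).differentiableAt)
      (fun t => (hFderiv t).deriv) t₁ t₂
  intro t₁ t₂
  have hrw : ∀ t : ℝ,
      (∫ σ in (0:ℝ)..1, ⟪v (t, γ (t, σ)), deriv (fun s' => γ (t, s')) σ⟫) = Fc t := by
    intro t
    apply intervalIntegral.integral_congr
    intro σ _
    show ⟪v (t, γ (t, σ)), deriv (fun s' => γ (t, s')) σ⟫ = f (t, σ)
    rw [(hγσ t σ).deriv]
  rw [hrw t₁, hrw t₂]
  exact hconst t₁ t₂
end
end

section
/- Invariance equation for the quasi-vorticity vector field (equation (quasivort-invar_vector_field)): Let u, W : ℝ × E → E and ρ : ℝ × E → ℝ be smooth with ρ(t,x) > 0 for all (t,x). Assume the continuity equation ∂t ρ + div(ρu) = 0 holds everywhere, and W satisfies the 2-form advection equation ∂t W + D_x W(u) − D_x u(W) + (div u)·W = 0 everywhere. Then the vector field η := ρ⁻¹·W satisfies the relabelling-symmetry (invariance) equation ∂t η + [u,η] = 0 everywhere. -/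
open scoped RealInnerProductSpace
open MeasureTheory
noncomputable section

/-- Trace of the rank-one map `v ↦ φ(v) • a` equals `φ a`. -/
lemma trace_smulRight_aux {E : Type*} [NormedAddCommGroup E] [NormedSpace ℝ E]
    [FiniteDimensional ℝ E] (φ : E →L[ℝ] ℝ) (a : E) :
    LinearMap.trace ℝ E ((φ.smulRight a : E →L[ℝ] E) : E →ₗ[ℝ] E) = φ a := by
  have h : ((φ.smulRight a : E →L[ℝ] E) : E →ₗ[ℝ] E)
      = dualTensorHom ℝ E E ((φ : E →ₗ[ℝ] ℝ) ⊗ₜ a) := by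
    ext v; simp
  rw [h]
  have := LinearMap.trace_eq_contract ℝ E
  calc LinearMap.trace ℝ E (dualTensorHom ℝ E E ((φ : E →ₗ[ℝ] ℝ) ⊗ₜ a))
      = (LinearMap.trace ℝ E ∘ₗ dualTensorHom ℝ E E) ((φ : E →ₗ[ℝ] ℝ) ⊗ₜ a) := rfl
    _ = contractLeft ℝ E ((φ : E →ₗ[ℝ] ℝ) ⊗ₜ a) := by rw [this]
    _ = φ a := by simp

/-- Invariance equation for the quasi-vorticity vector field (equation
(quasivort-invar_vector_field)): if `ρ` satisfies the continuity equation and `W` the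
2-form advection equation, then `η = ρ⁻¹ W` satisfies `∂ₜη + [u,η] = 0`. -/
theorem quasi_vorticity_invariance {n : ℕ} (hn : 1 ≤ n)
    (u W : ℝ × EuclideanSpace ℝ (Fin n) → EuclideanSpace ℝ (Fin n))
    (ρ : ℝ × EuclideanSpace ℝ (Fin n) → ℝ)
    (hu : ContDiff ℝ (⊤ : ℕ∞) u) (hW : ContDiff ℝ (⊤ : ℕ∞) W) (hρ : ContDiff ℝ (⊤ : ℕ∞) ρ)
    (hρpos : ∀ (t : ℝ) (x : EuclideanSpace ℝ (Fin n)), 0 < ρ (t, x))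
    (hcont : ∀ (t : ℝ) (x : EuclideanSpace ℝ (Fin n)),
      dt ρ t x + dive (fun q => ρ q • u q) t x = 0)
    (hW2form : ∀ (t : ℝ) (x : EuclideanSpace ℝ (Fin n)),
      dt W t x + Dx W t x (u (t, x)) - Dx u t x (W (t, x)) + dive u t x • W (t, x) = 0) :
    ∀ (t : ℝ) (x : EuclideanSpace ℝ (Fin n)),
      dt (fun p => (ρ p)⁻¹ • W p) t x
        + bracket u (fun p => (ρ p)⁻¹ • W p) t x = 0 := by
  intro t x
  have hρd : Differentiable ℝ ρ := hρ.differentiable (by simp)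
  have hWd : Differentiable ℝ W := hW.differentiable (by simp)
  have hud : Differentiable ℝ u := hu.differentiable (by simp)
  have hne : ρ (t, x) ≠ 0 := (hρpos t x).ne'
  -- time-slice differentiability
  have htmap : DifferentiableAt ℝ (fun τ : ℝ => (τ, x)) t :=
    differentiableAt_id.prodMk (differentiableAt_const x)
  have hxmap : DifferentiableAt ℝ (fun y : EuclideanSpace ℝ (Fin n) => (t, y)) x :=
    (differentiableAt_const t).prodMk differentiableAt_id
  have hρt : HasDerivAt (fun τ => ρ (τ, x)) (dt ρ t x) t :=
    ((hρd (t, x)).comp t htmap).hasDerivAt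
  have hWt : HasDerivAt (fun τ => W (τ, x)) (dt W t x) t :=
    ((hWd (t, x)).comp t htmap).hasDerivAt
  have hρx : HasFDerivAt (fun y => ρ (t, y)) (Dx ρ t x) x :=
    ((hρd (t, x)).comp x hxmap).hasFDerivAt
  have hWx : HasFDerivAt (fun y => W (t, y)) (Dx W t x) x :=
    ((hWd (t, x)).comp x hxmap).hasFDerivAt
  have hux : HasFDerivAt (fun y => u (t, y)) (Dx u t x) x :=
    ((hud (t, x)).comp x hxmap).hasFDerivAt
  -- time derivative of η = ρ⁻¹ • W
  have h1 : dt (fun p => (ρ p)⁻¹ • W p) t x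
      = (ρ (t, x))⁻¹ • dt W t x + (-(dt ρ t x) / ρ (t, x) ^ 2) • W (t, x) :=
    ((hρt.inv hne).smul hWt).deriv
  -- spatial derivative of ρ⁻¹
  have hinvx : HasFDerivAt (fun y => (ρ (t, y))⁻¹)
      ((-(ρ (t, x) ^ 2)⁻¹) • Dx ρ t x) x := by
    have := (hasDerivAt_inv hne).comp_hasFDerivAt x hρx
    exact this
  -- spatial derivative of η
  have h2 : Dx (fun p => (ρ p)⁻¹ • W p) t x
      = (ρ (t, x))⁻¹ • Dx W t x
        + ((-(ρ (t, x) ^ 2)⁻¹) • Dx ρ t x).smulRight (W (t, x)) :=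
    (hinvx.smul hWx).fderiv
  -- divergence of ρ • u
  have h3 : dive (fun q => ρ q • u q) t x
      = ρ (t, x) * dive u t x + Dx ρ t x (u (t, x)) := by
    have hDρu : Dx (fun q => ρ q • u q) t x
        = ρ (t, x) • Dx u t x + (Dx ρ t x).smulRight (u (t, x)) :=
      (hρx.smul hux).fderiv
    simp only [dive, hDρu]
    rw [show (((ρ (t, x) • Dx u t x + (Dx ρ t x).smulRight (u (t, x))) : EuclideanSpace ℝ (Fin n) →L[ℝ] EuclideanSpace ℝ (Fin n))
        : EuclideanSpace ℝ (Fin n) →ₗ[ℝ] EuclideanSpace ℝ (Fin n))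
      = ρ (t, x) • ((Dx u t x : EuclideanSpace ℝ (Fin n) →L[ℝ] EuclideanSpace ℝ (Fin n)) : EuclideanSpace ℝ (Fin n) →ₗ[ℝ] EuclideanSpace ℝ (Fin n))
        + (((Dx ρ t x).smulRight (u (t, x)) : EuclideanSpace ℝ (Fin n) →L[ℝ] EuclideanSpace ℝ (Fin n)) : EuclideanSpace ℝ (Fin n) →ₗ[ℝ] EuclideanSpace ℝ (Fin n)) from rfl]
    rw [map_add, LinearMap.map_smul, trace_smulRight_aux]
    simp [smul_eq_mul]
  -- continuity equation in expanded form
  have hc : dt ρ t x + ρ (t, x) * dive u t x + Dx ρ t x (u (t, x)) = 0 := by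
    have := hcont t x
    rw [h3] at this
    linarith
  -- 2-form equation
  have hw := hW2form t x
  -- assemble
  simp only [bracket, h1, h2]
  rw [show Dx u t x ((fun p => (ρ p)⁻¹ • W p) (t, x))
      = (ρ (t, x))⁻¹ • Dx u t x (W (t, x)) from by simp]
  simp only [ContinuousLinearMap.add_apply, ContinuousLinearMap.smul_apply,
    ContinuousLinearMap.smulRight_apply]
  have hdtW : dt W t x = -(Dx W t x (u (t, x))) + Dx u t x (W (t, x))
      - dive u t x • W (t, x) := by
    have := hw
    abel_nf at this ⊢
    linear_combination (norm := module) this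
  have hdtρ : dt ρ t x = -(ρ (t, x) * dive u t x) - Dx ρ t x (u (t, x)) := by
    linarith
  rw [hdtW, hdtρ]
  match_scalars <;> field_simp <;> ring_nf <;> field_simp <;> ring
end
end

section
/- Clebsch-modified Kelvin equation (Section 4.2 example): Let u, v : ℝ × E → E and s, g, f, c : ℝ × E → ℝ be smooth. Assume: (i) s is advected, ∂t s + D_x s(u) = 0 everywhere; (ii) the Lagrange multiplier satisfies ∂t g + D_x g(u) = f everywhere; and (iii) v satisfies ∂t v + D_x v(u) + (D_x u)ᵀ v = ∇c − f·∇s everywhere. Then the modified velocity ṽ := v + g·∇s satisfies the Kelvin equation ∂t ṽ + D_x ṽ(u) + (D_x u)ᵀ ṽ = ∇c everywhere. -/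
open scoped RealInnerProductSpace
open MeasureTheory
noncomputable section

namespace Clebsch

variable {n : ℕ} {F : Type*} [NormedAddCommGroup F] [NormedSpace ℝ F]

/-- The inclusion `e ↦ (0, e)` as a continuous linear map. -/
def inrE (n : ℕ) : EuclideanSpace ℝ (Fin n) →L[ℝ] ℝ × EuclideanSpace ℝ (Fin n) :=
  (0 : EuclideanSpace ℝ (Fin n) →L[ℝ] ℝ).prod (ContinuousLinearMap.id ℝ _)

@[simp] lemma inrE_apply (e : EuclideanSpace ℝ (Fin n)) : inrE n e = (0, e) := rfl

lemma hasFDerivAt_sliceX {w : ℝ × EuclideanSpace ℝ (Fin n) → F} {t : ℝ}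
    {x : EuclideanSpace ℝ (Fin n)} (hw : DifferentiableAt ℝ w (t, x)) :
    HasFDerivAt (fun y => w (t, y)) ((fderiv ℝ w (t, x)).comp (inrE n)) x :=
  hw.hasFDerivAt.comp x (HasFDerivAt.prodMk (hasFDerivAt_const t x) (hasFDerivAt_id x))

lemma Dx_eq {w : ℝ × EuclideanSpace ℝ (Fin n) → F} {t : ℝ}
    {x : EuclideanSpace ℝ (Fin n)} (hw : DifferentiableAt ℝ w (t, x)) :
    Dx w t x = (fderiv ℝ w (t, x)).comp (inrE n) :=
  (hasFDerivAt_sliceX hw).fderiv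

lemma Dx_apply {w : ℝ × EuclideanSpace ℝ (Fin n) → F} {t : ℝ}
    {x : EuclideanSpace ℝ (Fin n)} (hw : DifferentiableAt ℝ w (t, x))
    (e : EuclideanSpace ℝ (Fin n)) : Dx w t x e = fderiv ℝ w (t, x) (0, e) := by
  rw [Dx_eq hw]; rfl

lemma hasDerivAt_sliceT {w : ℝ × EuclideanSpace ℝ (Fin n) → F} {t : ℝ}
    {x : EuclideanSpace ℝ (Fin n)} (hw : DifferentiableAt ℝ w (t, x)) :
    HasDerivAt (fun τ => w (τ, x)) (fderiv ℝ w (t, x) (1, 0)) t :=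
  hw.hasFDerivAt.comp_hasDerivAt t (HasDerivAt.prodMk (hasDerivAt_id t) (hasDerivAt_const t x))

lemma dt_eq {w : ℝ × EuclideanSpace ℝ (Fin n) → F} {t : ℝ}
    {x : EuclideanSpace ℝ (Fin n)} (hw : DifferentiableAt ℝ w (t, x)) :
    dt w t x = fderiv ℝ w (t, x) (1, 0) :=
  (hasDerivAt_sliceT hw).deriv

/-- Riesz-type map sending `L` to the vector representing `e ↦ L (0, e)`. -/
def Tm (n : ℕ) : ((ℝ × EuclideanSpace ℝ (Fin n)) →L[ℝ] ℝ) →L[ℝ] EuclideanSpace ℝ (Fin n) :=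
  ∑ i : Fin n,
    (ContinuousLinearMap.apply ℝ ℝ ((0 : ℝ),
        (EuclideanSpace.basisFun (Fin n) ℝ : OrthonormalBasis (Fin n) ℝ _) i)).smulRight
      ((EuclideanSpace.basisFun (Fin n) ℝ : OrthonormalBasis (Fin n) ℝ _) i)

@[simp] lemma Tm_inner (L : (ℝ × EuclideanSpace ℝ (Fin n)) →L[ℝ] ℝ)
    (e : EuclideanSpace ℝ (Fin n)) : ⟪Tm n L, e⟫ = L (0, e) := by
  set b := (EuclideanSpace.basisFun (Fin n) ℝ : OrthonormalBasis (Fin n) ℝ _)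
  have h1 : ⟪Tm n L, e⟫ = ∑ i : Fin n, ⟪b i, e⟫ • L (0, b i) := by
    simp only [Tm, ContinuousLinearMap.sum_apply, ContinuousLinearMap.smulRight_apply,
      ContinuousLinearMap.apply_apply, sum_inner, real_inner_smul_left]
    exact Finset.sum_congr rfl fun i _ => by rw [smul_eq_mul, mul_comm]
  rw [h1]
  have h2 : ((0 : ℝ), e) = ∑ i : Fin n, ⟪b i, e⟫ • (((0 : ℝ), b i) : ℝ × EuclideanSpace ℝ (Fin n)) := by
    rw [Prod.ext_iff]
    constructor
    · simp [Prod.fst_sum]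
    · simp only [Prod.snd_sum, Prod.smul_mk]
      exact (b.sum_repr' e).symm
  rw [h2, map_sum]
  exact Finset.sum_congr rfl fun i _ => by rw [_root_.map_smul]

lemma gradient_inner (f : EuclideanSpace ℝ (Fin n) → ℝ) (x e : EuclideanSpace ℝ (Fin n)) :
    ⟪gradient f x, e⟫ = fderiv ℝ f x e :=
  InnerProductSpace.toDual_symm_apply

lemma grad_eq {s : ℝ × EuclideanSpace ℝ (Fin n) → ℝ} {t : ℝ}
    {x : EuclideanSpace ℝ (Fin n)} (hw : DifferentiableAt ℝ s (t, x)) :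
    grad s t x = Tm n (fderiv ℝ s (t, x)) := by
  refine ext_inner_right ℝ fun e => ?_
  rw [grad, gradient_inner, (hasFDerivAt_sliceX hw).fderiv, Tm_inner]
  rfl

end Clebsch

/-- Clebsch-modified Kelvin equation (Section 4.2 example): if `s` is advected, the
Lagrange multiplier satisfies `∂ₜg + D_x g(u) = f`, and `v` satisfies
`∂ₜv + D_x v(u) + (D_x u)ᵀ v = ∇c − f ∇s`, then `ṽ = v + g ∇s` satisfies the Kelvin
equation `∂ₜṽ + D_x ṽ(u) + (D_x u)ᵀ ṽ = ∇c`. -/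
theorem clebsch_modified_kelvin {n : ℕ} (hn : 1 ≤ n)
    (u v : ℝ × EuclideanSpace ℝ (Fin n) → EuclideanSpace ℝ (Fin n))
    (s g f c : ℝ × EuclideanSpace ℝ (Fin n) → ℝ)
    (hu : ContDiff ℝ (⊤ : ℕ∞) u) (hv : ContDiff ℝ (⊤ : ℕ∞) v) (hs : ContDiff ℝ (⊤ : ℕ∞) s)
    (hg : ContDiff ℝ (⊤ : ℕ∞) g) (hf : ContDiff ℝ (⊤ : ℕ∞) f) (hc : ContDiff ℝ (⊤ : ℕ∞) c)
    (hadv : ∀ (t : ℝ) (x : EuclideanSpace ℝ (Fin n)), dt s t x + Dx s t x (u (t, x)) = 0)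
    (hmult : ∀ (t : ℝ) (x : EuclideanSpace ℝ (Fin n)),
      dt g t x + Dx g t x (u (t, x)) = f (t, x))
    (hveq : ∀ (t : ℝ) (x : EuclideanSpace ℝ (Fin n)),
      dt v t x + Dx v t x (u (t, x)) + ContinuousLinearMap.adjoint (Dx u t x) (v (t, x))
        = grad c t x - f (t, x) • grad s t x) :
    ∀ (t : ℝ) (x : EuclideanSpace ℝ (Fin n)),
      dt (fun p => v p + g p • grad s p.1 p.2) t x
        + Dx (fun p => v p + g p • grad s p.1 p.2) t x (u (t, x))
        + ContinuousLinearMap.adjoint (Dx u t x)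
            (v (t, x) + g (t, x) • grad s t x)
      = grad c t x := by
  intro t x
  have hsd : Differentiable ℝ s := hs.differentiable (by simp)
  have hud : Differentiable ℝ u := hu.differentiable (by simp)
  have hvd : Differentiable ℝ v := hv.differentiable (by simp)
  have hgd : Differentiable ℝ g := hg.differentiable (by simp)
  have hDsc : ContDiff ℝ (⊤ : ℕ∞) (fderiv ℝ s) := hs.fderiv_right (by simp)
  have hDsd : Differentiable ℝ (fderiv ℝ s) := hDsc.differentiable (by simp)
  set Ds := fderiv ℝ s with hDsdef
  set DDs := fderiv ℝ Ds (t, x) with hDDsdef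
  set Du := fderiv ℝ u (t, x) with hDudef
  set Dv := fderiv ℝ v (t, x) with hDvdef
  set Dg := fderiv ℝ g (t, x) with hDgdef
  set uu := u (t, x) with huudef
  -- replace grad s by its Riesz form
  have hgradeq : ∀ p : ℝ × EuclideanSpace ℝ (Fin n),
      grad s p.1 p.2 = Clebsch.Tm n (Ds p) := fun p => Clebsch.grad_eq (hsd (p.1, p.2))
  have hFeq : (fun p : ℝ × EuclideanSpace ℝ (Fin n) => v p + g p • grad s p.1 p.2)
      = fun p => v p + g p • Clebsch.Tm n (Ds p) := funext fun p => by rw [hgradeq p]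
  rw [hFeq, Clebsch.grad_eq (hsd (t, x))]
  -- derivative of the modified field
  have hW' : HasFDerivAt (fun p => Clebsch.Tm n (Ds p)) ((Clebsch.Tm n).comp DDs) (t, x) :=
    (Clebsch.Tm n).hasFDerivAt.comp (t, x) (hDsd (t, x)).hasFDerivAt
  have hF : HasFDerivAt (fun p => v p + g p • Clebsch.Tm n (Ds p))
      (Dv + (g (t, x) • ((Clebsch.Tm n).comp DDs)
        + Dg.smulRight (Clebsch.Tm n (Ds (t, x))))) (t, x) :=
    (hvd (t, x)).hasFDerivAt.add ((hgd (t, x)).hasFDerivAt.smul hW')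
  rw [Clebsch.dt_eq hF.differentiableAt, Clebsch.Dx_apply hF.differentiableAt, hF.fderiv]
  simp only [ContinuousLinearMap.add_apply, ContinuousLinearMap.smul_apply,
    ContinuousLinearMap.coe_comp', Function.comp_apply, ContinuousLinearMap.smulRight_apply]
  rw [map_add, _root_.map_smul, ← hDsdef]
  -- auxiliary reformulations of the hypotheses
  have hmult' : Dg (1, 0) + Dg (0, uu) = f (t, x) := by
    have h := hmult t x
    rwa [Clebsch.dt_eq (hgd (t, x)),
      Clebsch.Dx_apply (hgd (t, x))] at h
  have hveq' : Dv (1, 0) + Dv (0, uu) + ContinuousLinearMap.adjoint (Dx u t x) (v (t, x))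
      = grad c t x - f (t, x) • Clebsch.Tm n (Ds (t, x)) := by
    have h := hveq t x
    rwa [Clebsch.dt_eq (hvd (t, x)),
      Clebsch.Dx_apply (hvd (t, x)), Clebsch.grad_eq (hsd (t, x))] at h
  -- the key identity : the gradient of an advected scalar satisfies the cotangent equation
  have hkey : Clebsch.Tm n (DDs (1, 0)) + Clebsch.Tm n (DDs (0, uu))
      + ContinuousLinearMap.adjoint (Dx u t x) (Clebsch.Tm n (Ds (t, x))) = 0 := by
    refine ext_inner_right ℝ fun e => ?_
    have hsymm := second_derivative_symmetric (𝕜 := ℝ) (f := s) (f' := Ds) (f'' := DDs)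
      (fun y => (hsd y).hasFDerivAt) (hDsd (t, x)).hasFDerivAt
    have hadvd : Ds (t, x) (0, Du (0, e)) + DDs (0, e) ((1 : ℝ), uu) = 0 := by
      have hzero : (fun p : ℝ × EuclideanSpace ℝ (Fin n) => Ds p ((1 : ℝ), u p))
          = fun _ => (0 : ℝ) := by
        funext p
        have h := hadv p.1 p.2
        rw [Clebsch.dt_eq (hsd (p.1, p.2)),
          Clebsch.Dx_apply (hsd (p.1, p.2))] at h
        have hsum : Ds p ((1 : ℝ), u p) = Ds p ((1 : ℝ), 0) + Ds p ((0 : ℝ), u p) := by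
          rw [← map_add]; norm_num
        rw [hsum]; exact h
      have hΦ : HasFDerivAt (fun p : ℝ × EuclideanSpace ℝ (Fin n) => Ds p ((1 : ℝ), u p))
          ((Ds (t, x)).comp
              ((0 : (ℝ × EuclideanSpace ℝ (Fin n)) →L[ℝ] ℝ).prod Du)
            + DDs.flip ((1 : ℝ), uu)) (t, x) :=
        (hDsd (t, x)).hasFDerivAt.clm_apply
          (HasFDerivAt.prodMk (hasFDerivAt_const (1 : ℝ) (t, x)) (hud (t, x)).hasFDerivAt)
      have h2 : HasFDerivAt (fun p : ℝ × EuclideanSpace ℝ (Fin n) => Ds p ((1 : ℝ), u p))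
          (0 : (ℝ × EuclideanSpace ℝ (Fin n)) →L[ℝ] ℝ) (t, x) := by
        rw [hzero]; exact hasFDerivAt_const 0 (t, x)
      have h0 := hΦ.unique h2
      have h3 := congrArg
        (fun L : (ℝ × EuclideanSpace ℝ (Fin n)) →L[ℝ] ℝ => L ((0 : ℝ), e)) h0
      simpa using h3
    simp only [inner_add_left, Clebsch.Tm_inner, ContinuousLinearMap.adjoint_inner_left,
      inner_zero_left]
    rw [Clebsch.Dx_apply (hud (t, x)), ← hDudef]
    rw [hsymm (1, 0) (0, e), hsymm (0, uu) (0, e)]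
    have hcomb : DDs (0, e) ((1 : ℝ), (0 : EuclideanSpace ℝ (Fin n)))
        + DDs (0, e) ((0 : ℝ), uu) = DDs (0, e) ((1 : ℝ), uu) := by
      rw [← map_add]; norm_num
    linarith [hadvd, hcomb]
  -- final bookkeeping
  trans ((Dv (1, 0) + Dv (0, uu) + ContinuousLinearMap.adjoint (Dx u t x) (v (t, x)))
    + (Dg (1, 0) + Dg (0, uu)) • Clebsch.Tm n (Ds (t, x))
    + g (t, x) • (Clebsch.Tm n (DDs (1, 0)) + Clebsch.Tm n (DDs (0, uu))
        + ContinuousLinearMap.adjoint (Dx u t x) (Clebsch.Tm n (Ds (t, x)))))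
  · module
  · rw [hveq', hmult', hkey, smul_zero, add_zero, sub_add_cancel]
end
end

section
/- The potential-vorticity symmetry vector field satisfies both advection constraints (equations (simulsoln), (pv-eta)): Let φ, s : E → ℝ be smooth scalar fields and ρ : E → ℝ a smooth function with ρ(x) > 0 for all x, where E = EuclideanSpace ℝ (Fin 3). Define the vector field η := ρ⁻¹·(∇φ × ∇s). Then η simultaneously satisfies the symmetry constraints for the advected density and the advected scalar: div(ρ·η) = 0, ⟪η(x), ∇s(x)⟫ = 0, and ⟪η(x), ∇φ(x)⟫ = 0 for all x. -/
open scoped RealInnerProductSpace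
open MeasureTheory
noncomputable section

private lemma crossc (a b : EuclideanSpace ℝ (Fin 3)) (i : Fin 3) :
    cross a b i = a (i+1) * b (i+2) - a (i+2) * b (i+1) := by
  fin_cases i <;> simp [cross]

private lemma gradApply (f : EuclideanSpace ℝ (Fin 3) → ℝ) (y : EuclideanSpace ℝ (Fin 3))
    (i : Fin 3) : gradient f y i = fderiv ℝ f y (EuclideanSpace.single i 1) := by
  have h1 : gradient f y i = ⟪gradient f y, EuclideanSpace.single i 1⟫ := by
    rw [EuclideanSpace.inner_single_right]; simp
  rw [h1, gradient, InnerProductSpace.toDual_symm_apply]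

/-- Cross product of time-independent vector fields is used via `cross`; here we state
that the potential-vorticity symmetry vector field `η = ρ⁻¹ (∇φ × ∇s)` satisfies both
advection constraints (equations (simulsoln), (pv-eta)): `div(ρη) = 0`, `⟪η, ∇s⟫ = 0`,
and `⟪η, ∇φ⟫ = 0`. -/
theorem pv_symmetry_vector_field
    (φ s ρ : EuclideanSpace ℝ (Fin 3) → ℝ)
    (hφ : ContDiff ℝ (⊤ : ℕ∞) φ) (hs : ContDiff ℝ (⊤ : ℕ∞) s) (hρ : ContDiff ℝ (⊤ : ℕ∞) ρ)
    (hρpos : ∀ x, 0 < ρ x) :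
    ∀ x : EuclideanSpace ℝ (Fin 3),
      (LinearMap.trace ℝ _
          ((fderiv ℝ (fun y => ρ y • ((ρ y)⁻¹ • cross (gradient φ y) (gradient s y))) x :
            EuclideanSpace ℝ (Fin 3) →ₗ[ℝ] EuclideanSpace ℝ (Fin 3))) = 0)
      ∧ ⟪(ρ x)⁻¹ • cross (gradient φ x) (gradient s x), gradient s x⟫ = 0
      ∧ ⟪(ρ x)⁻¹ • cross (gradient φ x) (gradient s x), gradient φ x⟫ = 0 := by
  intro x
  have hρx : ρ x ≠ 0 := (hρpos x).ne'
  have e : Fin 3 → EuclideanSpace ℝ (Fin 3) := fun i => EuclideanSpace.single i 1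
  refine ⟨?_, ?_, ?_⟩
  · -- divergence part
    have hfun : (fun y => ρ y • ((ρ y)⁻¹ • cross (gradient φ y) (gradient s y)))
        = fun y => cross (gradient φ y) (gradient s y) := by
      funext y
      rw [smul_smul, mul_inv_cancel₀ (hρpos y).ne', one_smul]
    rw [hfun]
    set Φ := fderiv ℝ (fderiv ℝ φ) x with hΦdef
    set Ψ := fderiv ℝ (fderiv ℝ s) x with hΨdef
    have hφ1 : ∀ y, DifferentiableAt ℝ φ y := fun y => (hφ.differentiable (by simp)).differentiableAt
    have hs1 : ∀ y, DifferentiableAt ℝ s y := fun y => (hs.differentiable (by simp)).differentiableAt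
    have hΦ : HasFDerivAt (fderiv ℝ φ) Φ x :=
      (((hφ.fderiv_right (m := 1) (WithTop.coe_le_coe.mpr le_top)).differentiable one_ne_zero) x).hasFDerivAt
    have hΨ : HasFDerivAt (fderiv ℝ s) Ψ x :=
      (((hs.fderiv_right (m := 1) (WithTop.coe_le_coe.mpr le_top)).differentiable one_ne_zero) x).hasFDerivAt
    have hsymmφ : ∀ v w, Φ v w = Φ w v :=
      second_derivative_symmetric (fun y => (hφ1 y).hasFDerivAt) hΦ
    have hsymms : ∀ v w, Ψ v w = Ψ w v :=
      second_derivative_symmetric (fun y => (hs1 y).hasFDerivAt) hΨ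
    have hg : ∀ j : Fin 3, HasFDerivAt (fun y => fderiv ℝ φ y (EuclideanSpace.single j 1))
        (Φ.flip (EuclideanSpace.single j 1)) x := by
      intro j
      have h := (ContinuousLinearMap.apply ℝ ℝ (EuclideanSpace.single j (1:ℝ))).hasFDerivAt.comp x hΦ
      exact h.congr_fderiv (by ext v; rfl)
    have hh : ∀ j : Fin 3, HasFDerivAt (fun y => fderiv ℝ s y (EuclideanSpace.single j 1))
        (Ψ.flip (EuclideanSpace.single j 1)) x := by
      intro j
      have h := (ContinuousLinearMap.apply ℝ ℝ (EuclideanSpace.single j (1:ℝ))).hasFDerivAt.comp x hΨ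
      exact h.congr_fderiv (by ext v; rfl)
    set D : Fin 3 → (EuclideanSpace ℝ (Fin 3) →L[ℝ] ℝ) := fun i =>
      (fderiv ℝ φ x (EuclideanSpace.single (i+1) 1) • Ψ.flip (EuclideanSpace.single (i+2) 1)
        + fderiv ℝ s x (EuclideanSpace.single (i+2) 1) • Φ.flip (EuclideanSpace.single (i+1) 1))
      - (fderiv ℝ φ x (EuclideanSpace.single (i+2) 1) • Ψ.flip (EuclideanSpace.single (i+1) 1)
        + fderiv ℝ s x (EuclideanSpace.single (i+1) 1) • Φ.flip (EuclideanSpace.single (i+2) 1))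
      with hD
    have hDi : ∀ i : Fin 3,
        HasFDerivAt (fun y => cross (gradient φ y) (gradient s y) i) (D i) x := by
      intro i
      simp only [crossc, gradApply, hD]
      exact ((hg (i+1)).mul (hh (i+2))).sub ((hg (i+2)).mul (hh (i+1)))
    set L : EuclideanSpace ℝ (Fin 3) →L[ℝ] EuclideanSpace ℝ (Fin 3) :=
      ((EuclideanSpace.equiv (Fin 3) ℝ).symm : (Fin 3 → ℝ) →L[ℝ] EuclideanSpace ℝ (Fin 3)).comp
        (ContinuousLinearMap.pi D) with hL
    have hF : HasFDerivAt (fun y => cross (gradient φ y) (gradient s y)) L x := by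
      have h0 : HasFDerivAt (fun y => (fun i => cross (gradient φ y) (gradient s y) i))
          (ContinuousLinearMap.pi D) x := hasFDerivAt_pi.mpr hDi
      exact ((EuclideanSpace.equiv (Fin 3) ℝ).symm.hasFDerivAt).comp x h0
    rw [hF.fderiv]
    have htr : LinearMap.trace ℝ _ (L : EuclideanSpace ℝ (Fin 3) →ₗ[ℝ] EuclideanSpace ℝ (Fin 3))
        = ∑ i : Fin 3, L (EuclideanSpace.single i 1) i := by
      rw [LinearMap.trace_eq_matrix_trace ℝ (EuclideanSpace.basisFun (Fin 3) ℝ).toBasis,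
        Matrix.trace]
      simp [Matrix.diag, LinearMap.toMatrix_apply, EuclideanSpace.basisFun_apply,
        EuclideanSpace.basisFun_repr]
    rw [htr]
    have hLval : ∀ i : Fin 3, L (EuclideanSpace.single i 1) i = D i (EuclideanSpace.single i 1) := by
      intro i
      rfl
    simp only [hLval, hD, ContinuousLinearMap.sub_apply, ContinuousLinearMap.add_apply,
      ContinuousLinearMap.smul_apply, ContinuousLinearMap.flip_apply, smul_eq_mul]
    rw [Fin.sum_univ_three]
    norm_num
    simp only [show ((1 + 1 : Fin 3)) = 2 by decide, show ((1 + 2 : Fin 3)) = 0 by decide,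
      show ((2 + 1 : Fin 3)) = 0 by decide, show ((2 + 2 : Fin 3)) = 1 by decide]
    rw [hsymmφ (EuclideanSpace.single 1 1) (EuclideanSpace.single 0 1),
      hsymmφ (EuclideanSpace.single 2 1) (EuclideanSpace.single 0 1),
      hsymmφ (EuclideanSpace.single 2 1) (EuclideanSpace.single 1 1),
      hsymms (EuclideanSpace.single 1 1) (EuclideanSpace.single 0 1),
      hsymms (EuclideanSpace.single 2 1) (EuclideanSpace.single 0 1),
      hsymms (EuclideanSpace.single 2 1) (EuclideanSpace.single 1 1)]
    ring
  · rw [real_inner_smul_left]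
    have : ⟪cross (gradient φ x) (gradient s x), gradient s x⟫ = 0 := by
      simp only [PiLp.inner_apply, RCLike.inner_apply, conj_trivial, Fin.sum_univ_three, cross,
        WithLp.equiv_symm_apply, PiLp.toLp_apply, Matrix.cons_val_zero, Matrix.cons_val_one, Matrix.head_cons,
        Matrix.cons_val_two, Matrix.tail_cons]
      ring
    rw [this, mul_zero]
  · rw [real_inner_smul_left]
    have : ⟪cross (gradient φ x) (gradient s x), gradient φ x⟫ = 0 := by
      simp only [PiLp.inner_apply, RCLike.inner_apply, conj_trivial, Fin.sum_univ_three, cross,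
        WithLp.equiv_symm_apply, PiLp.toLp_apply, Matrix.cons_val_zero, Matrix.cons_val_one, Matrix.head_cons,
        Matrix.cons_val_two, Matrix.tail_cons]
      ring
    rw [this, mul_zero]
end
end
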